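/- arXiv:1812.04926 — 3 statements merged into one kernel-verified Lean document; each statement's English description precedes it below -/
import Mathlib

section
/- Let n ≥ 1 and let f : Γ₊ⁿ → ℝ be increasing in each argument. Let U be an open neighborhood of 0 in ℝⁿ, let δ > 0, t₀ ∈ ℝ, and let u₁, u₂ : U × (t₀ − δ, t₀] → ℝ be functions that are twice continuously differentiable in the space variable and differentiable in time, such that for a = 1, 2 and all (x, t): the vector λ[u_a](x,t) of ascending eigenvalues of g^{-1/2} h g^{-1/2} lies in Γ₊ⁿ, where g = I + Du_a (Du_a)ᵀ and h = −D²u_a/√(1 + |Du_a|²) are evaluated at (x,t), and u_a satisfies the graph equation ∂ₜ u_a = −f(λ[u_a]) √(1 + |Du_a|²). If the function x ↦ (u₂ − u₁)(x, t₀) attains a local minimum at x = 0, then ∂ₜ(u₂ − u₁)(0, t₀) ≥ 0. -/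
open Matrix
open scoped Classical

/-- The square root of a positive semidefinite matrix, as defined in the older Mathlib
(removed since). -/
noncomputable def Matrix.PosSemidef.sqrt {n : Type*} [Fintype n] [DecidableEq n]
    {A : Matrix n n ℝ} (hA : A.PosSemidef) : Matrix n n ℝ :=
  hA.1.eigenvectorUnitary.1 * diagonal ((↑) ∘ Real.sqrt ∘ hA.1.eigenvalues) *
  (star hA.1.eigenvectorUnitary : Matrix n n ℝ)

/-- The ascending rearrangement of the eigenvalues of the symmetric matrix
`g^{-1/2} * h * g^{-1/2}`, where `g^{-1/2}` is the inverse of the positive definite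
square root of the positive definite matrix `g`.  (Junk value `0` if `g` is not
positive definite or the conjugated matrix fails to be symmetric.) -/
noncomputable def relEigAsc {n : ℕ} (g h : Matrix (Fin n) (Fin n) ℝ) : Fin n → ℝ :=
  if hg : g.PosDef then
    if hM : (hg.posSemidef.sqrt⁻¹ * h * hg.posSemidef.sqrt⁻¹).IsHermitian then
      hM.eigenvalues ∘ Tuple.sort hM.eigenvalues
    else 0
  else 0

/-- The vector of principal curvatures of the graph of `u`, expressed in terms of the
gradient vector `p = Du` and the Hessian matrix `H = D²u`: the ascending eigenvalues of
`g^{-1/2} h g^{-1/2}` with `g = I + p pᵀ` and `h = -H / √(1 + |p|²)`. -/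
noncomputable def graphLambda {n : ℕ} (p : Fin n → ℝ) (H : Matrix (Fin n) (Fin n) ℝ) :
    Fin n → ℝ :=
  relEigAsc (1 + Matrix.vecMulVec p p) ((-(Real.sqrt (1 + ∑ j, p j ^ 2))⁻¹) • H)

/-!
At a spatial minimum of `u₂ - u₁` the gradients of `u₁` and `u₂` agree and `D²u₂ - D²u₁` is
positive semidefinite. The metric `g = I + Du Duᵀ` depends only on the gradient, while
`h = -D²u / √(1 + |Du|²)`, so `h₁ - h₂` is positive semidefinite; conjugating by `g^{-1/2}` and
applying Weyl's monotonicity of ordered eigenvalues gives `λ[u₂] ≤ λ[u₁]` componentwise. Since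
`f` is increasing, the flow equations then give `∂ₜu₂ ≥ ∂ₜu₁`.
-/

open Filter Topology Set

theorem IsLocalMin.secondDeriv_nonneg {φ φ' : ℝ → ℝ} {x q : ℝ} (hmin : IsLocalMin φ x)
    (hφ : ∀ᶠ s in 𝓝 x, HasDerivAt φ (φ' s) s) (hφ' : HasDerivAt φ' q x) : 0 ≤ q := by
  by_contra! hq
  have hφ'x : φ' x = 0 := hmin.hasDerivAt_eq_zero hφ.self_of_nhds
  have hneg : ∀ᶠ s in 𝓝[>] x, φ' s < 0 := by
    filter_upwards [((hasDerivAt_iff_tendsto_slope.1 hφ').mono_left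
      (nhdsGT_le_nhdsNE x)).eventually_lt_const hq, self_mem_nhdsWithin] with s hs hxs
    rw [slope_def_field, hφ'x, sub_zero] at hs
    by_contra! h
    exact hs.not_ge (div_nonneg h (sub_pos.2 hxs).le)
  obtain ⟨b, hxb, hb⟩ := mem_nhdsGT_iff_exists_Ioc_subset.1
    (hneg.and (nhdsWithin_le_nhds (hφ.and hmin)))
  have hderiv : ∀ s ∈ Icc x b, HasDerivAt φ (φ' s) s := by
    rintro s ⟨hxs, hsb⟩
    rcases hxs.eq_or_lt with rfl | hxs
    · exact hφ.self_of_nhds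
    · exact (hb ⟨hxs, hsb⟩).2.1
  obtain ⟨c, hc, hslope⟩ := exists_hasDerivAt_eq_slope φ φ' hxb
    (fun s hs => (hderiv s hs).continuousAt.continuousWithinAt)
    (fun s hs => hderiv s (Ioo_subset_Icc_self hs))
  have hφc : φ' c < 0 := (hb (Ioo_subset_Ioc_self hc)).1
  have hφb : φ x ≤ φ b := (hb ⟨hxb, le_rfl⟩).2.2
  rw [hslope] at hφc
  exact hφc.not_ge (div_nonneg (sub_nonneg.2 hφb) (sub_nonneg.2 hxb.le))

theorem IsLocalMin.hessian_nonneg {E : Type*} [NormedAddCommGroup E] [NormedSpace ℝ E]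
    {w : E → ℝ} {w' : E → E →L[ℝ] ℝ} {w'' : E →L[ℝ] E →L[ℝ] ℝ} {a : E}
    (hmin : IsLocalMin w a) (hw : ∀ᶠ x in 𝓝 a, HasFDerivAt w (w' x) x)
    (hw' : HasFDerivAt w' w'' a) (v : E) : 0 ≤ w'' v v := by
  set ℓ : ℝ → E := fun s => a + s • v
  have hℓ : ∀ s, HasDerivAt ℓ v s := fun s => by
    simpa only [id, one_smul] using ((hasDerivAt_id s).smul_const v).const_add a
  have hℓ0 : ℓ 0 = a := by simp [ℓ]
  have hℓa : Tendsto ℓ (𝓝 0) (𝓝 a) := hℓ0 ▸ (hℓ 0).continuousAt.tendsto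
  refine IsLocalMin.secondDeriv_nonneg (φ := w ∘ ℓ) (φ' := fun s => w' (ℓ s) v) (x := 0) ?_ ?_ ?_
  · exact (hℓ0 ▸ hmin).comp_continuous (hℓ 0).continuousAt
  · filter_upwards [hℓa.eventually hw] with s hs
    exact hs.comp_hasDerivAt s (hℓ s)
  · rw [← hℓ0] at hw'
    exact (ContinuousLinearMap.apply ℝ ℝ v).hasFDerivAt.comp_hasDerivAt 0
      (hw'.comp_hasDerivAt 0 (hℓ 0))

section Coordinates

variable {ι : Type*} [Fintype ι]

theorem IsLocalMin.eq_zero_of_hasFDerivAt_sum_smul_proj {w : (ι → ℝ) → ℝ} {p : ι → ℝ}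
    {a : ι → ℝ} (hmin : IsLocalMin w a)
    (hw : HasFDerivAt w (∑ j, p j • (ContinuousLinearMap.proj j : (ι → ℝ) →L[ℝ] ℝ)) a) :
    p = 0 := by
  funext i
  simpa [Pi.single_apply] using
    congr($(hmin.hasFDerivAt_eq_zero hw) (Pi.single i 1))

theorem IsLocalMin.posSemidef_of_hasFDerivAt_mulVecLin {w : (ι → ℝ) → ℝ}
    {Dw : (ι → ℝ) → ι → ℝ} {H : Matrix ι ι ℝ} {a : ι → ℝ} (hmin : IsLocalMin w a)
    (hw : ∀ᶠ x in 𝓝 a,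
      HasFDerivAt w (∑ j, Dw x j • (ContinuousLinearMap.proj j : (ι → ℝ) →L[ℝ] ℝ)) x)
    (hDw : HasFDerivAt Dw (LinearMap.toContinuousLinearMap H.mulVecLin) a)
    (hH : H.IsHermitian) : H.PosSemidef := by
  let Φ : (ι → ℝ) →L[ℝ] (ι → ℝ) →L[ℝ] ℝ :=
    ∑ j, (ContinuousLinearMap.proj j).smulRight (ContinuousLinearMap.proj j)
  have hΦ : (fun x => ∑ j, Dw x j • (ContinuousLinearMap.proj j : (ι → ℝ) →L[ℝ] ℝ)) =
      Φ ∘ Dw := by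
    ext x v
    simp [Φ]
  refine Matrix.PosSemidef.of_dotProduct_mulVec_nonneg hH fun v => ?_
  have := hmin.hessian_nonneg hw (hΦ ▸ Φ.hasFDerivAt.comp a hDw) v
  simpa [Φ, dotProduct, mul_comm] using this

end Coordinates

lemma EuclideanSpace.dotProduct_eq_inner {ι : Type*} [Fintype ι] (x y : EuclideanSpace ℝ ι) :
    ⇑x ⬝ᵥ ⇑y = inner ℝ x y := by
  simp [EuclideanSpace.inner_eq_star_dotProduct, dotProduct_comm]

lemma Submodule.exists_mem_inf_ne_zero_of_finrank_lt {K V : Type*} [DivisionRing K]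
    [AddCommGroup V] [Module K V] [FiniteDimensional K V] (s t : Submodule K V)
    (h : Module.finrank K V < Module.finrank K s + Module.finrank K t) :
    ∃ x ∈ s, x ∈ t ∧ x ≠ 0 := by
  by_contra! hst
  exact (Submodule.finrank_add_finrank_le_of_disjoint
    (Submodule.disjoint_def.2 hst)).not_gt h

namespace Matrix.IsHermitian

variable {ι : Type*} [Fintype ι] [DecidableEq ι] {A : Matrix ι ι ℝ}

lemma exists_rayleigh_eq_sum_of_mem_span (hA : A.IsHermitian) {S : Finset ι}
    {v : EuclideanSpace ℝ ι} (hv : v ∈ Submodule.span ℝ (hA.eigenvectorBasis '' S)) :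
    ∃ c : ι → ℝ, ‖v‖ ^ 2 = ∑ k ∈ S, c k ^ 2 ∧
      ⇑v ⬝ᵥ (A *ᵥ ⇑v) = ∑ k ∈ S, hA.eigenvalues k * c k ^ 2 := by
  obtain ⟨c, rfl⟩ := (Submodule.mem_span_image_finset_iff_exists_fun' ℝ).1 hv
  have hon := hA.eigenvectorBasis.orthonormal
  refine ⟨c, ?_, ?_⟩
  · rw [← real_inner_self_eq_norm_sq, hon.inner_sum]
    simp [sq]
  · have hAv : A *ᵥ ⇑(∑ k ∈ S, c k • hA.eigenvectorBasis k) =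
        ⇑(∑ k ∈ S, (hA.eigenvalues k * c k) • hA.eigenvectorBasis k) := by
      simp [Matrix.mulVec_sum, Matrix.mulVec_smul, hA.mulVec_eigenvectorBasis, smul_smul, mul_comm]
    rw [hAv, EuclideanSpace.dotProduct_eq_inner, hon.inner_sum]
    exact Finset.sum_congr rfl fun k _ => by simp only [Real.ringHom_apply]; ring

lemma mul_norm_sq_le_rayleigh (hA : A.IsHermitian) {S : Finset ι} {c : ℝ}
    (hc : ∀ k ∈ S, c ≤ hA.eigenvalues k) {v : EuclideanSpace ℝ ι}
    (hv : v ∈ Submodule.span ℝ (hA.eigenvectorBasis '' S)) :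
    c * ‖v‖ ^ 2 ≤ ⇑v ⬝ᵥ (A *ᵥ ⇑v) := by
  obtain ⟨a, hnorm, hq⟩ := hA.exists_rayleigh_eq_sum_of_mem_span hv
  rw [hnorm, hq, Finset.mul_sum]
  exact Finset.sum_le_sum fun k hk => mul_le_mul_of_nonneg_right (hc k hk) (sq_nonneg _)

lemma rayleigh_le_mul_norm_sq (hA : A.IsHermitian) {S : Finset ι} {c : ℝ}
    (hc : ∀ k ∈ S, hA.eigenvalues k ≤ c) {v : EuclideanSpace ℝ ι}
    (hv : v ∈ Submodule.span ℝ (hA.eigenvectorBasis '' S)) :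
    ⇑v ⬝ᵥ (A *ᵥ ⇑v) ≤ c * ‖v‖ ^ 2 := by
  obtain ⟨a, hnorm, hq⟩ := hA.exists_rayleigh_eq_sum_of_mem_span hv
  rw [hnorm, hq, Finset.mul_sum]
  exact Finset.sum_le_sum fun k hk => mul_le_mul_of_nonneg_right (hc k hk) (sq_nonneg _)

lemma finrank_span_eigenvectorBasis_image (hA : A.IsHermitian) (S : Finset ι) :
    Module.finrank ℝ (Submodule.span ℝ (hA.eigenvectorBasis '' S)) = S.card := by
  rw [Set.image_eq_range]
  exact (finrank_span_eq_card
    (hA.eigenvectorBasis.orthonormal.linearIndependent.comp _ Subtype.coe_injective)).trans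
    (Fintype.card_coe S)

/-- Weyl monotonicity, by the Courant–Fischer argument: the span of the eigenvectors of `A`
for its top `n - i` eigenvalues meets the span of those of `B` for its bottom `i + 1`. -/
theorem eigenvalues_comp_sort_le {n : ℕ} {A B : Matrix (Fin n) (Fin n) ℝ}
    (hA : A.IsHermitian) (hB : B.IsHermitian) (hAB : (B - A).PosSemidef) (i : Fin n) :
    (hA.eigenvalues ∘ Tuple.sort hA.eigenvalues) i ≤
      (hB.eigenvalues ∘ Tuple.sort hB.eigenvalues) i := by
  set σ := Tuple.sort hA.eigenvalues
  set τ := Tuple.sort hB.eigenvalues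
  set V := Submodule.span ℝ (hA.eigenvectorBasis '' ((Finset.Ici i).image σ))
  set W := Submodule.span ℝ (hB.eigenvectorBasis '' ((Finset.Iic i).image τ))
  have hV : Module.finrank ℝ V = n - (i : ℕ) := by
    rw [finrank_span_eigenvectorBasis_image, Finset.card_image_of_injective _ σ.injective,
      Fin.card_Ici]
  have hW : Module.finrank ℝ W = (i : ℕ) + 1 := by
    rw [finrank_span_eigenvectorBasis_image, Finset.card_image_of_injective _ τ.injective,
      Fin.card_Iic]
  obtain ⟨v, hvV, hvW, hv⟩ := Submodule.exists_mem_inf_ne_zero_of_finrank_lt V W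
    (by rw [finrank_euclideanSpace_fin, hV, hW]; omega)
  have hlow : hA.eigenvalues (σ i) * ‖v‖ ^ 2 ≤ ⇑v ⬝ᵥ (A *ᵥ ⇑v) := by
    refine hA.mul_norm_sq_le_rayleigh (fun k hk => ?_) hvV
    obtain ⟨j, hj, rfl⟩ := Finset.mem_image.1 hk
    exact Tuple.monotone_sort hA.eigenvalues (Finset.mem_Ici.1 hj)
  have hhigh : ⇑v ⬝ᵥ (B *ᵥ ⇑v) ≤ hB.eigenvalues (τ i) * ‖v‖ ^ 2 := by
    refine hB.rayleigh_le_mul_norm_sq (fun k hk => ?_) hvW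
    obtain ⟨j, hj, rfl⟩ := Finset.mem_image.1 hk
    exact Tuple.monotone_sort hB.eigenvalues (Finset.mem_Iic.1 hj)
  have hmid : ⇑v ⬝ᵥ (A *ᵥ ⇑v) ≤ ⇑v ⬝ᵥ (B *ᵥ ⇑v) := by
    have := hAB.dotProduct_mulVec_nonneg ⇑v
    rw [sub_mulVec, dotProduct_sub, star_trivial] at this
    linarith
  exact le_of_mul_le_mul_right (hlow.trans (hmid.trans hhigh)) (by positivity)

end Matrix.IsHermitian

lemma Matrix.PosSemidef.isHermitian_sqrt {ι : Type*} [Fintype ι] [DecidableEq ι]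
    {A : Matrix ι ι ℝ} (hA : A.PosSemidef) : hA.sqrt.IsHermitian := by
  simpa [Matrix.PosSemidef.sqrt, star_eq_conjTranspose] using
    isHermitian_mul_mul_conjTranspose (hA.1.eigenvectorUnitary : Matrix ι ι ℝ)
      (isHermitian_diagonal ((↑) ∘ Real.sqrt ∘ hA.1.eigenvalues))

section GraphCurvature

variable {n : ℕ}

lemma relEigAsc_mono {g h₁ h₂ : Matrix (Fin n) (Fin n) ℝ} (hg : g.PosDef)
    (hh₁ : h₁.IsHermitian) (hh₂ : h₂.IsHermitian) (hle : (h₂ - h₁).PosSemidef) (i : Fin n) :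
    relEigAsc g h₁ i ≤ relEigAsc g h₂ i := by
  set S := hg.posSemidef.sqrt⁻¹
  have hS : Sᴴ = S := hg.posSemidef.isHermitian_sqrt.inv
  have hM₁ : (S * h₁ * S).IsHermitian := by
    simpa only [hS] using isHermitian_mul_mul_conjTranspose S hh₁
  have hM₂ : (S * h₂ * S).IsHermitian := by
    simpa only [hS] using isHermitian_mul_mul_conjTranspose S hh₂
  have hM : (S * h₂ * S - S * h₁ * S).PosSemidef := by
    simpa only [hS, Matrix.mul_sub, Matrix.sub_mul] using hle.mul_mul_conjTranspose_same S
  simp only [relEigAsc, dif_pos hg]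
  rw [dif_pos hM₁, dif_pos hM₂]
  exact hM₁.eigenvalues_comp_sort_le hM₂ hM i

lemma posDef_one_add_vecMulVec_self {ι : Type*} [Fintype ι] [DecidableEq ι] (p : ι → ℝ) :
    (1 + vecMulVec p p).PosDef := by
  simpa using PosDef.one.add_posSemidef (posSemidef_vecMulVec_self_star p)

lemma graphLambda_antitone (p : Fin n → ℝ) {H₁ H₂ : Matrix (Fin n) (Fin n) ℝ}
    (hH₁ : H₁.IsHermitian) (hH₂ : H₂.IsHermitian) (hle : (H₂ - H₁).PosSemidef) (i : Fin n) :
    graphLambda p H₂ i ≤ graphLambda p H₁ i := by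
  set c := (Real.sqrt (1 + ∑ j, p j ^ 2))⁻¹
  refine relEigAsc_mono (posDef_one_add_vecMulVec_self p) (hH₂.smul (.all _))
    (hH₁.smul (.all _)) ?_ i
  have : (-c) • H₁ - (-c) • H₂ = c • (H₂ - H₁) := by module
  exact this ▸ hle.smul (by positivity)

end GraphCurvature

theorem comparison_pointwise_general {n : ℕ}
    (f : (Fin n → ℝ) → ℝ)
    (hf : ∀ lam mu : Fin n → ℝ, (∀ i, 0 < lam i) → (∀ i, 0 < mu i) →
      (∀ i, lam i ≤ mu i) → f lam ≤ f mu)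
    (U : Set (Fin n → ℝ)) (hU : IsOpen U) (h0 : (0 : Fin n → ℝ) ∈ U)
    (δ t₀ : ℝ) (hδ : 0 < δ)
    (u₁ u₂ : (Fin n → ℝ) → ℝ → ℝ)
    (Du₁ Du₂ : (Fin n → ℝ) → ℝ → (Fin n → ℝ))
    (D2u₁ D2u₂ : (Fin n → ℝ) → ℝ → Matrix (Fin n) (Fin n) ℝ)
    (ut₁ ut₂ : (Fin n → ℝ) → ℝ → ℝ)
    -- first spatial derivatives
    (hDu₁ : ∀ x ∈ U, ∀ t ∈ Set.Ioc (t₀ - δ) t₀,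
      HasFDerivAt (fun y => u₁ y t)
        (∑ j, Du₁ x t j • (ContinuousLinearMap.proj j : (Fin n → ℝ) →L[ℝ] ℝ)) x)
    (hDu₂ : ∀ x ∈ U, ∀ t ∈ Set.Ioc (t₀ - δ) t₀,
      HasFDerivAt (fun y => u₂ y t)
        (∑ j, Du₂ x t j • (ContinuousLinearMap.proj j : (Fin n → ℝ) →L[ℝ] ℝ)) x)
    -- second spatial derivatives
    (hD2u₁ : ∀ x ∈ U, ∀ t ∈ Set.Ioc (t₀ - δ) t₀,
      HasFDerivAt (fun y => Du₁ y t)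
        (LinearMap.toContinuousLinearMap (D2u₁ x t).mulVecLin) x)
    (hD2u₂ : ∀ x ∈ U, ∀ t ∈ Set.Ioc (t₀ - δ) t₀,
      HasFDerivAt (fun y => Du₂ y t)
        (LinearMap.toContinuousLinearMap (D2u₂ x t).mulVecLin) x)
    -- the second derivatives are continuous in space and symmetric
    (hsym₁ : ∀ x ∈ U, ∀ t ∈ Set.Ioc (t₀ - δ) t₀, (D2u₁ x t).IsHermitian)
    (hsym₂ : ∀ x ∈ U, ∀ t ∈ Set.Ioc (t₀ - δ) t₀, (D2u₂ x t).IsHermitian)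
    -- strict convexity: the principal curvatures lie in the positive cone
    (hlam₁ : ∀ x ∈ U, ∀ t ∈ Set.Ioc (t₀ - δ) t₀, ∀ i,
      0 < graphLambda (Du₁ x t) (D2u₁ x t) i)
    (hlam₂ : ∀ x ∈ U, ∀ t ∈ Set.Ioc (t₀ - δ) t₀, ∀ i,
      0 < graphLambda (Du₂ x t) (D2u₂ x t) i)
    -- the graph equation of Andrews' flow
    (heq₁ : ∀ x ∈ U, ∀ t ∈ Set.Ioc (t₀ - δ) t₀,
      ut₁ x t = - f (graphLambda (Du₁ x t) (D2u₁ x t)) *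
        Real.sqrt (1 + ∑ j, Du₁ x t j ^ 2))
    (heq₂ : ∀ x ∈ U, ∀ t ∈ Set.Ioc (t₀ - δ) t₀,
      ut₂ x t = - f (graphLambda (Du₂ x t) (D2u₂ x t)) *
        Real.sqrt (1 + ∑ j, Du₂ x t j ^ 2))
    -- local minimum of u₂ - u₁ at x = 0 at time t₀
    (hmin : IsLocalMin (fun x => u₂ x t₀ - u₁ x t₀) 0) :
    0 ≤ ut₂ 0 t₀ - ut₁ 0 t₀ := by
  have ht : t₀ ∈ Set.Ioc (t₀ - δ) t₀ := ⟨by linarith, le_rfl⟩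
  have hDw : ∀ x ∈ U, HasFDerivAt (fun y => u₂ y t₀ - u₁ y t₀)
      (∑ j, (Du₂ x t₀ - Du₁ x t₀) j • (ContinuousLinearMap.proj j : (Fin n → ℝ) →L[ℝ] ℝ)) x :=
    fun x hx => ((hDu₂ x hx t₀ ht).fun_sub (hDu₁ x hx t₀ ht)).congr_fderiv <| by
      ext v
      simp [sub_mul]
  have hgrad : Du₂ 0 t₀ = Du₁ 0 t₀ :=
    sub_eq_zero.1 (hmin.eq_zero_of_hasFDerivAt_sum_smul_proj (hDw 0 h0))
  have hhess : (D2u₂ 0 t₀ - D2u₁ 0 t₀).PosSemidef :=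
    hmin.posSemidef_of_hasFDerivAt_mulVecLin (eventually_of_mem (hU.mem_nhds h0) hDw)
      (by simpa [sub_mulVec] using (hD2u₂ 0 h0 t₀ ht).sub (hD2u₁ 0 h0 t₀ ht))
      ((hsym₂ 0 h0 t₀ ht).sub (hsym₁ 0 h0 t₀ ht))
  have hlam : ∀ i, graphLambda (Du₂ 0 t₀) (D2u₂ 0 t₀) i ≤ graphLambda (Du₁ 0 t₀) (D2u₁ 0 t₀) i :=
    hgrad ▸ graphLambda_antitone _ (hsym₁ 0 h0 t₀ ht) (hsym₂ 0 h0 t₀ ht) hhess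
  have hf₀ := hf _ _ (hlam₂ 0 h0 t₀ ht) (hlam₁ 0 h0 t₀ ht) hlam
  rw [heq₁ 0 h0 t₀ ht, heq₂ 0 h0 t₀ ht]
  rw [hgrad] at hf₀ ⊢
  linarith [mul_le_mul_of_nonneg_right hf₀ (Real.sqrt_nonneg (1 + ∑ j, Du₁ 0 t₀ j ^ 2))]

/-- The analytic heart of the comparison principle for Andrews' flow: if `u₁, u₂` are
graph solutions of Andrews' flow (C² in space, differentiable in time) with strictly
convex graphs, and `u₂ - u₁` at the final time `t₀` has a local minimum at `x = 0`,
then `∂ₜ(u₂ - u₁)(0, t₀) ≥ 0`. -/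
theorem comparison_pointwise {n : ℕ} (hn : 1 ≤ n)
    (f : (Fin n → ℝ) → ℝ)
    (hf : ∀ lam mu : Fin n → ℝ, (∀ i, 0 < lam i) → (∀ i, 0 < mu i) →
      (∀ i, lam i ≤ mu i) → f lam ≤ f mu)
    (U : Set (Fin n → ℝ)) (hU : IsOpen U) (h0 : (0 : Fin n → ℝ) ∈ U)
    (δ t₀ : ℝ) (hδ : 0 < δ)
    (u₁ u₂ : (Fin n → ℝ) → ℝ → ℝ)
    (Du₁ Du₂ : (Fin n → ℝ) → ℝ → (Fin n → ℝ))
    (D2u₁ D2u₂ : (Fin n → ℝ) → ℝ → Matrix (Fin n) (Fin n) ℝ)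
    (ut₁ ut₂ : (Fin n → ℝ) → ℝ → ℝ)
    -- first spatial derivatives
    (hDu₁ : ∀ x ∈ U, ∀ t ∈ Set.Ioc (t₀ - δ) t₀,
      HasFDerivAt (fun y => u₁ y t)
        (∑ j, Du₁ x t j • (ContinuousLinearMap.proj j : (Fin n → ℝ) →L[ℝ] ℝ)) x)
    (hDu₂ : ∀ x ∈ U, ∀ t ∈ Set.Ioc (t₀ - δ) t₀,
      HasFDerivAt (fun y => u₂ y t)
        (∑ j, Du₂ x t j • (ContinuousLinearMap.proj j : (Fin n → ℝ) →L[ℝ] ℝ)) x)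
    -- second spatial derivatives
    (hD2u₁ : ∀ x ∈ U, ∀ t ∈ Set.Ioc (t₀ - δ) t₀,
      HasFDerivAt (fun y => Du₁ y t)
        (LinearMap.toContinuousLinearMap (D2u₁ x t).mulVecLin) x)
    (hD2u₂ : ∀ x ∈ U, ∀ t ∈ Set.Ioc (t₀ - δ) t₀,
      HasFDerivAt (fun y => Du₂ y t)
        (LinearMap.toContinuousLinearMap (D2u₂ x t).mulVecLin) x)
    -- the second derivatives are continuous in space and symmetric
    (hcont₁ : ∀ t ∈ Set.Ioc (t₀ - δ) t₀, ContinuousOn (fun x => D2u₁ x t) U)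
    (hcont₂ : ∀ t ∈ Set.Ioc (t₀ - δ) t₀, ContinuousOn (fun x => D2u₂ x t) U)
    (hsym₁ : ∀ x ∈ U, ∀ t ∈ Set.Ioc (t₀ - δ) t₀, (D2u₁ x t).IsHermitian)
    (hsym₂ : ∀ x ∈ U, ∀ t ∈ Set.Ioc (t₀ - δ) t₀, (D2u₂ x t).IsHermitian)
    -- time derivatives
    (hut₁ : ∀ x ∈ U, ∀ t ∈ Set.Ioc (t₀ - δ) t₀,
      HasDerivWithinAt (fun τ => u₁ x τ) (ut₁ x t) (Set.Ioc (t₀ - δ) t₀) t)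
    (hut₂ : ∀ x ∈ U, ∀ t ∈ Set.Ioc (t₀ - δ) t₀,
      HasDerivWithinAt (fun τ => u₂ x τ) (ut₂ x t) (Set.Ioc (t₀ - δ) t₀) t)
    -- strict convexity: the principal curvatures lie in the positive cone
    (hlam₁ : ∀ x ∈ U, ∀ t ∈ Set.Ioc (t₀ - δ) t₀, ∀ i,
      0 < graphLambda (Du₁ x t) (D2u₁ x t) i)
    (hlam₂ : ∀ x ∈ U, ∀ t ∈ Set.Ioc (t₀ - δ) t₀, ∀ i,
      0 < graphLambda (Du₂ x t) (D2u₂ x t) i)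
    -- the graph equation of Andrews' flow
    (heq₁ : ∀ x ∈ U, ∀ t ∈ Set.Ioc (t₀ - δ) t₀,
      ut₁ x t = - f (graphLambda (Du₁ x t) (D2u₁ x t)) *
        Real.sqrt (1 + ∑ j, Du₁ x t j ^ 2))
    (heq₂ : ∀ x ∈ U, ∀ t ∈ Set.Ioc (t₀ - δ) t₀,
      ut₂ x t = - f (graphLambda (Du₂ x t) (D2u₂ x t)) *
        Real.sqrt (1 + ∑ j, Du₂ x t j ^ 2))
    -- local minimum of u₂ - u₁ at x = 0 at time t₀
    (hmin : IsLocalMin (fun x => u₂ x t₀ - u₁ x t₀) 0) :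
    0 ≤ ut₂ 0 t₀ - ut₁ 0 t₀ :=
  comparison_pointwise_general f hf U hU h0 δ t₀ hδ u₁ u₂ Du₁ Du₂ D2u₁ D2u₂ ut₁ ut₂ hDu₁ hDu₂ hD2u₁
    hD2u₂ hsym₁ hsym₂ hlam₁ hlam₂ heq₁ heq₂ hmin
end

section
/- Let ψ : ℝ → ℝ be twice continuously differentiable, let J ≥ 1 and m ≥ 1, and define Φ(ỹ, z) = (ψ(‖z‖) ι(ỹ), z) ∈ ℝ^{J+1} × ℝ^m for ỹ in the open unit ball of ℝ^J and z ∈ ℝ^m \ {0}, where ι(ỹ) = (ỹ, √(1 − ‖ỹ‖²)) ∈ ℝ^{J+1}. Fix z ≠ 0 and set s = ‖z‖, and let ν = (1 + ψ'(s)²)^{-1/2} (ι(0), −(ψ'(s)/s) z) ∈ ℝ^{J+1} × ℝ^m. Then at the point (ỹ, z) = (0, z): (a) ⟨∂²Φ/∂ỹⁱ∂ỹʲ, ν⟩ = −ψ(s) δᵢⱼ/√(1 + ψ'(s)²) for 1 ≤ i, j ≤ J; (b) ⟨∂²Φ/∂ỹʲ∂z^q, ν⟩ = 0 for 1 ≤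 j ≤ J, 1 ≤ q ≤ m; and (c) ⟨∂²Φ/∂z^p∂z^q, ν⟩ = (1 + ψ'(s)²)^{-1/2} (ψ''(s) zᵖ z^q/s² + ψ'(s)(δ_{pq} s² − zᵖ z^q)/s³) for 1 ≤ p, q ≤ m. -/
/-!
Since the second component of `Φ` is linear, only the first component of `ν`, a multiple of
`ι(0) = e_{J+1}`, sees `D²Φ`, and pairing with `ι(0)` turns the first component of `Φ` into the
separated product `√(1 - ‖ỹ‖²) · ψ(‖z‖)`. At `ỹ = 0` the hemisphere factor has value `1`,
gradient `0` and Hessian `-⟪·, ·⟫`, so the Leibniz rule leaves `-ψ(s) ⟪u₁, v₁⟫` plus the Hessian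
of the radial function `ψ(‖z‖)`, which the chain rule through `‖z‖ = √(‖z‖²)` computes.
-/

open scoped RealInnerProductSpace

/-- The embedding `ỹ ↦ (ỹ, √(1 - ‖ỹ‖²))` of the open unit ball of `ℝ^J` into the unit
sphere of `ℝ^{J+1}`. -/
noncomputable def iotaMap {J : ℕ} (y : EuclideanSpace ℝ (Fin J)) :
    EuclideanSpace ℝ (Fin (J + 1)) :=
  WithLp.toLp 2 (Fin.snoc (y : Fin J → ℝ) (Real.sqrt (1 - ‖y‖ ^ 2)))

/-- The local parametrization `Φ(ỹ, z) = (ψ(‖z‖) ι(ỹ), z)` of the rotationally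
symmetric hypersurface `{(ψ(‖z‖) y, z) : y ∈ S^J}`. -/
noncomputable def PhiMap {J m : ℕ} (ψ : ℝ → ℝ)
    (p : EuclideanSpace ℝ (Fin J) × EuclideanSpace ℝ (Fin m)) :
    EuclideanSpace ℝ (Fin (J + 1)) × EuclideanSpace ℝ (Fin m) :=
  (ψ ‖p.2‖ • iotaMap p.1, p.2)

open scoped Topology

section SecondDerivative

variable {𝕜 : Type*} [NontriviallyNormedField 𝕜]
  {E F G : Type*} [NormedAddCommGroup E] [NormedSpace 𝕜 E] [NormedAddCommGroup F]
  [NormedSpace 𝕜 F] [NormedAddCommGroup G] [NormedSpace 𝕜 G]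

theorem ContinuousLinearMap.fderiv_fderiv_comp_left (L : F →L[𝕜] G) {f : E → F} {x : E}
    (hf : ContDiffAt 𝕜 2 f x) (u v : E) :
    fderiv 𝕜 (fderiv 𝕜 (L ∘ f)) x u v = L (fderiv 𝕜 (fderiv 𝕜 f) x u v) := by
  simpa [iteratedFDeriv_two_apply] using
    congr($(L.iteratedFDeriv_comp_left hf (i := 2) le_rfl) ![u, v])

theorem ContDiffAt.eventually_differentiableAt {f : E → F} {x : E} (hf : ContDiffAt 𝕜 2 f x) :
    ∀ᶠ y in 𝓝 x, DifferentiableAt 𝕜 f y :=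
  (hf.eventually (by simp)).mono fun _ hy => hy.differentiableAt two_ne_zero

theorem ContDiffAt.hasFDerivAt_fderiv {f : E → F} {x : E} (hf : ContDiffAt 𝕜 2 f x) :
    HasFDerivAt (fderiv 𝕜 f) (fderiv 𝕜 (fderiv 𝕜 f) x) x :=
  ((hf.fderiv_right (m := 1) (by norm_num)).differentiableAt one_ne_zero).hasFDerivAt

theorem ContinuousLinearMap.fderiv_fderiv_comp_right (L : E →L[𝕜] F) {f : F → G} {x : E}
    (hf : ContDiffAt 𝕜 2 f (L x)) (u v : E) :
    fderiv 𝕜 (fderiv 𝕜 (f ∘ L)) x u v = fderiv 𝕜 (fderiv 𝕜 f) (L x) (L u) (L v) := by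
  have hfirst : fderiv 𝕜 (f ∘ L) =ᶠ[𝓝 x] fun y => (fderiv 𝕜 f (L y)).comp L :=
    (L.continuous.continuousAt.eventually hf.eventually_differentiableAt).mono fun y hy => by
      rw [fderiv_comp y hy L.differentiableAt, L.fderiv]
  have hsecond : HasFDerivAt (fun y => (fderiv 𝕜 f (L y)).comp L) _ x :=
    (hf.hasFDerivAt_fderiv.comp x L.hasFDerivAt).clm_comp (hasFDerivAt_const L x)
  rw [hfirst.fderiv_eq, hsecond.fderiv]
  simp

theorem fderiv_fderiv_mul_apply {a b : E → 𝕜} {x : E} (ha : ContDiffAt 𝕜 2 a x)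
    (hb : ContDiffAt 𝕜 2 b x) (u v : E) :
    fderiv 𝕜 (fderiv 𝕜 fun y => a y * b y) x u v =
      fderiv 𝕜 (fderiv 𝕜 a) x u v * b x + fderiv 𝕜 a x u * fderiv 𝕜 b x v +
        fderiv 𝕜 a x v * fderiv 𝕜 b x u + a x * fderiv 𝕜 (fderiv 𝕜 b) x u v := by
  have hfirst : fderiv 𝕜 (fun y => a y * b y) =ᶠ[𝓝 x]
      fun y => a y • fderiv 𝕜 b y + b y • fderiv 𝕜 a y :=
    (ha.eventually_differentiableAt.and hb.eventually_differentiableAt).mono fun y hy =>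
      fderiv_mul hy.1 hy.2
  have hsecond : HasFDerivAt (fun y => a y • fderiv 𝕜 b y + b y • fderiv 𝕜 a y) _ x :=
    ((ha.differentiableAt two_ne_zero).hasFDerivAt.fun_smul hb.hasFDerivAt_fderiv).add
    ((hb.differentiableAt two_ne_zero).hasFDerivAt.fun_smul ha.hasFDerivAt_fderiv)
  rw [hfirst.fderiv_eq, hsecond.fderiv]
  simp only [add_apply, smul_apply, ContinuousLinearMap.smulRight_apply, smul_eq_mul]
  ring

theorem fderiv_fderiv_comp_apply {χ : 𝕜 → 𝕜} {f : E → 𝕜} {x : E} (hf : ContDiffAt 𝕜 2 f x)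
    (hχ : ContDiffAt 𝕜 2 χ (f x)) (u v : E) :
    fderiv 𝕜 (fderiv 𝕜 (χ ∘ f)) x u v =
      deriv (deriv χ) (f x) * (fderiv 𝕜 f x u * fderiv 𝕜 f x v) +
        deriv χ (f x) * fderiv 𝕜 (fderiv 𝕜 f) x u v := by
  have hfirst : fderiv 𝕜 (χ ∘ f) =ᶠ[𝓝 x] fun y => deriv χ (f y) • fderiv 𝕜 f y :=
    (hf.continuousAt.eventually hχ.eventually_differentiableAt |>.and
      hf.eventually_differentiableAt).mono fun y hy => by
      rw [fderiv_comp y hy.1 hy.2, hy.1.hasDerivAt.hasFDerivAt.fderiv]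
      ext; simp [mul_comm]
  have hsecond : HasFDerivAt (fun y => deriv χ (f y) • fderiv 𝕜 f y) _ x :=
    ((((hχ.derivWithin (m := 1) (by norm_num)).differentiableAt one_ne_zero).hasDerivAt
      |>.comp_hasFDerivAt x (hf.differentiableAt two_ne_zero).hasFDerivAt).fun_smul
        hf.hasFDerivAt_fderiv)
  rw [hfirst.fderiv_eq, hsecond.fderiv]
  simp only [Function.comp_apply, add_apply, smul_apply, ContinuousLinearMap.smulRight_apply,
    smul_eq_mul]
  ring

theorem fderiv_fderiv_mul_fst_snd_apply {a : E → 𝕜} {b : F → 𝕜} {x : E} {y : F}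
    (ha : ContDiffAt 𝕜 2 a x) (hb : ContDiffAt 𝕜 2 b y) (u v : E × F) :
    fderiv 𝕜 (fderiv 𝕜 fun p : E × F => a p.1 * b p.2) (x, y) u v =
      fderiv 𝕜 (fderiv 𝕜 a) x u.1 v.1 * b y + fderiv 𝕜 a x u.1 * fderiv 𝕜 b y v.2 +
        fderiv 𝕜 a x v.1 * fderiv 𝕜 b y u.2 + a x * fderiv 𝕜 (fderiv 𝕜 b) y u.2 v.2 := by
  set fst := ContinuousLinearMap.fst 𝕜 E F
  set snd := ContinuousLinearMap.snd 𝕜 E F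
  have hDa : fderiv 𝕜 (a ∘ fst) (x, y) = (fderiv 𝕜 a x).comp fst := by
    rw [fderiv_comp (x, y) (ha.differentiableAt two_ne_zero) fst.differentiableAt, fst.fderiv]
    rfl
  have hDb : fderiv 𝕜 (b ∘ snd) (x, y) = (fderiv 𝕜 b y).comp snd := by
    rw [fderiv_comp (x, y) (hb.differentiableAt two_ne_zero) snd.differentiableAt, snd.fderiv]
    rfl
  rw [show (fun p : E × F => a p.1 * b p.2) = fun p => (a ∘ fst) p * (b ∘ snd) p from rfl,
    fderiv_fderiv_mul_apply (ha.comp (x, y) fst.contDiff.contDiffAt)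
      (hb.comp (x, y) snd.contDiff.contDiffAt),
    fst.fderiv_fderiv_comp_right ha, snd.fderiv_fderiv_comp_right hb, hDa, hDb]
  rfl

theorem ContinuousLinearMap.fderiv_fderiv (L : E →L[𝕜] F) (x : E) :
    fderiv 𝕜 (fderiv 𝕜 L) x = 0 := by
  rw [show fderiv 𝕜 L = fun _ => L from funext fun _ => L.fderiv, fderiv_const_apply]

end SecondDerivative

section InnerProductSpace

variable {E : Type*} [NormedAddCommGroup E] [InnerProductSpace ℝ E]

theorem fderiv_fderiv_norm_sq_apply (x u v : E) :
    fderiv ℝ (fderiv ℝ fun y : E => ‖y‖ ^ 2) x u v = 2 * ⟪u, v⟫ := by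
  rw [fderiv_norm_sq, fderiv_const_smul (innerSL ℝ : E →L[ℝ] E →L[ℝ] ℝ).differentiableAt,
    (innerSL ℝ : E →L[ℝ] E →L[ℝ] ℝ).fderiv]
  simp only [smul_apply, nsmul_eq_mul, Nat.cast_ofNat]
  rfl

theorem deriv_deriv_sqrt {t : ℝ} (ht : 0 < t) :
    deriv (deriv Real.sqrt) t = -(4 * t * √t)⁻¹ := by
  have hfirst : deriv Real.sqrt =ᶠ[𝓝 t] fun r => (2 * √r)⁻¹ :=
    (lt_mem_nhds ht).mono fun r hr => by simpa using (Real.hasDerivAt_sqrt hr.ne').deriv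
  have hsecond := ((Real.hasDerivAt_sqrt ht.ne').const_mul 2).fun_inv (by positivity)
  rw [hfirst.deriv_eq, hsecond.deriv]
  field_simp
  rw [Real.sq_sqrt ht.le]
  ring

theorem fderiv_norm_apply {x : E} (hx : x ≠ 0) (u : E) :
    fderiv ℝ (fun y : E => ‖y‖) x u = ⟪x, u⟫ / ‖x‖ := by
  have hnorm : (fun y : E => ‖y‖) = fun y => √(‖y‖ ^ 2) :=
    funext fun y => (Real.sqrt_sq (norm_nonneg y)).symm
  rw [hnorm, ((hasStrictFDerivAt_norm_sq x).hasFDerivAt.sqrt (by positivity)).fderiv]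
  simp only [Real.sqrt_sq (norm_nonneg x), smul_apply, nsmul_eq_mul, Nat.cast_ofNat,
    innerSL_apply_apply, smul_eq_mul]
  field_simp

theorem fderiv_fderiv_norm_apply {x : E} (hx : x ≠ 0) (u v : E) :
    fderiv ℝ (fderiv ℝ fun y : E => ‖y‖) x u v =
      (⟪u, v⟫ - ⟪x, u⟫ * ⟪x, v⟫ / ‖x‖ ^ 2) / ‖x‖ := by
  have hnorm : (fun y : E => ‖y‖) = Real.sqrt ∘ fun y => ‖y‖ ^ 2 :=
    funext fun y => (Real.sqrt_sq (norm_nonneg y)).symm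
  have hx2 : 0 < ‖x‖ ^ 2 := by positivity
  have hsqrt : ContDiffAt ℝ 2 Real.sqrt (‖x‖ ^ 2) := Real.contDiffAt_sqrt hx2.ne'
  have hnsq : ContDiffAt ℝ 2 (fun y : E => ‖y‖ ^ 2) x := (contDiff_norm_sq ℝ).contDiffAt
  rw [hnorm, fderiv_fderiv_comp_apply hnsq hsqrt,
    deriv_deriv_sqrt hx2, (Real.hasDerivAt_sqrt hx2.ne').deriv, fderiv_fderiv_norm_sq_apply,
    fderiv_norm_sq_apply]
  simp only [smul_apply, nsmul_eq_mul, Nat.cast_ofNat, innerSL_apply_apply,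
    Real.sqrt_sq (norm_nonneg x)]
  field_simp
  ring

theorem fderiv_fderiv_comp_norm_apply {χ : ℝ → ℝ} {x : E} (hχ : ContDiffAt ℝ 2 χ ‖x‖)
    (hx : x ≠ 0) (u v : E) :
    fderiv ℝ (fderiv ℝ fun y : E => χ ‖y‖) x u v =
      deriv χ ‖x‖ / ‖x‖ * ⟪u, v⟫ +
        (deriv (deriv χ) ‖x‖ / ‖x‖ ^ 2 - deriv χ ‖x‖ / ‖x‖ ^ 3) * (⟪x, u⟫ * ⟪x, v⟫) := by
  rw [show (fun y : E => χ ‖y‖) = χ ∘ fun y => ‖y‖ from rfl,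
    fderiv_fderiv_comp_apply (contDiffAt_norm ℝ hx) hχ, fderiv_fderiv_norm_apply hx,
    fderiv_norm_apply hx, fderiv_norm_apply hx]
  have : ‖x‖ ≠ 0 := norm_ne_zero_iff.mpr hx
  field_simp
  ring

theorem fderiv_sqrt_one_sub_norm_sq_zero :
    fderiv ℝ (fun y : E => √(1 - ‖y‖ ^ 2)) 0 = 0 := by
  have := ((hasStrictFDerivAt_norm_sq (0 : E)).hasFDerivAt.const_sub 1).sqrt (by simp)
  simpa using this.fderiv

theorem fderiv_fderiv_sqrt_one_sub_norm_sq_zero_apply (u v : E) :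
    fderiv ℝ (fderiv ℝ fun y : E => √(1 - ‖y‖ ^ 2)) 0 u v = -⟪u, v⟫ := by
  have hχ : ContDiffAt ℝ 2 (fun t => √(1 - t)) (‖(0 : E)‖ ^ 2) :=
    (Real.contDiffAt_sqrt (by simp)).comp _ (contDiffAt_const.sub contDiffAt_id)
  have hderiv : HasDerivAt (fun t => √(1 - t)) (-1 / 2) 0 := by
    simpa using ((hasDerivAt_id (0 : ℝ)).const_sub 1).sqrt (by norm_num)
  have hgrad : fderiv ℝ (fun y : E => ‖y‖ ^ 2) 0 = 0 := by simp [fderiv_norm_sq_apply]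
  rw [show (fun y : E => √(1 - ‖y‖ ^ 2)) = (fun t => √(1 - t)) ∘ fun y => ‖y‖ ^ 2 from rfl,
    fderiv_fderiv_comp_apply (contDiff_norm_sq ℝ).contDiffAt hχ, fderiv_fderiv_norm_sq_apply,
    hgrad, norm_zero, zero_pow two_ne_zero, hderiv.deriv]
  simp only [zero_apply, mul_zero, zero_add]
  ring

end InnerProductSpace

theorem EuclideanSpace.inner_single_one_single_one {ι : Type*} [Fintype ι] [DecidableEq ι]
    (i j : ι) :
    ⟪(EuclideanSpace.single i 1 : EuclideanSpace ℝ ι), EuclideanSpace.single j 1⟫ =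
      if i = j then 1 else 0 := by
  simp [EuclideanSpace.inner_single_left]

theorem iotaMap_zero {J : ℕ} :
    iotaMap (0 : EuclideanSpace ℝ (Fin J)) = EuclideanSpace.single (Fin.last J) 1 := by
  ext k
  refine Fin.lastCases ?_ (fun i => ?_) k
  · simp [iotaMap]
  · simp [iotaMap, (Fin.castSucc_lt_last i).ne]

theorem inner_iotaMap_zero_left {J : ℕ} (y : EuclideanSpace ℝ (Fin J)) :
    ⟪iotaMap 0, iotaMap y⟫ = √(1 - ‖y‖ ^ 2) := by
  rw [iotaMap_zero, EuclideanSpace.inner_single_left]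
  simp [iotaMap]

theorem contDiffAt_iotaMap {J : ℕ} {n : WithTop ℕ∞} {y : EuclideanSpace ℝ (Fin J)}
    (hy : ‖y‖ < 1) : ContDiffAt ℝ n iotaMap y := by
  have hpos : 1 - ‖y‖ ^ 2 ≠ 0 := by nlinarith [norm_nonneg y]
  rw [contDiffAt_piLp]
  intro k
  refine Fin.lastCases ?_ (fun i => ?_) k
  · simp only [iotaMap, Fin.snoc_last]
    exact (Real.contDiffAt_sqrt hpos).comp y (contDiffAt_const.sub (contDiffAt_id.norm_sq ℝ))
  · simp only [iotaMap, Fin.snoc_castSucc]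
    exact (contDiffAt_piLp 2).mp contDiffAt_id i

section PhiMap

variable {J m : ℕ} {ψ : ℝ → ℝ}

theorem contDiffAt_PhiMap {n : WithTop ℕ∞}
    {p : EuclideanSpace ℝ (Fin J) × EuclideanSpace ℝ (Fin m)} (hψ : ContDiffAt ℝ n ψ ‖p.2‖)
    (hp₁ : ‖p.1‖ < 1) (hp₂ : p.2 ≠ 0) : ContDiffAt ℝ n (PhiMap ψ) p :=
  ((hψ.comp p ((contDiffAt_norm ℝ hp₂).comp p contDiffAt_snd)).smul
    ((contDiffAt_iotaMap hp₁).comp p contDiffAt_fst)).prodMk contDiffAt_snd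

theorem fderiv_fderiv_PhiMap_snd {p : EuclideanSpace ℝ (Fin J) × EuclideanSpace ℝ (Fin m)}
    (hΦ : ContDiffAt ℝ 2 (PhiMap ψ) p)
    (u v : EuclideanSpace ℝ (Fin J) × EuclideanSpace ℝ (Fin m)) :
    (fderiv ℝ (fderiv ℝ (PhiMap ψ)) p u v).2 = 0 := by
  let snd := ContinuousLinearMap.snd ℝ (EuclideanSpace ℝ (Fin (J + 1))) (EuclideanSpace ℝ (Fin m))
  have hsnd : ⇑snd ∘ PhiMap ψ = ContinuousLinearMap.snd ℝ _ _ := rfl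
  have := snd.fderiv_fderiv_comp_left hΦ u v
  rw [hsnd, ContinuousLinearMap.fderiv_fderiv] at this
  exact this.symm

theorem inner_fderiv_fderiv_PhiMap_fst_iotaMap_zero {z : EuclideanSpace ℝ (Fin m)}
    (hψ : ContDiffAt ℝ 2 ψ ‖z‖) (hz : z ≠ 0)
    (u v : EuclideanSpace ℝ (Fin J) × EuclideanSpace ℝ (Fin m)) :
    ⟪(fderiv ℝ (fderiv ℝ (PhiMap ψ)) (0, z) u v).1, iotaMap 0⟫ =
      -ψ ‖z‖ * ⟪u.1, v.1⟫ + deriv ψ ‖z‖ / ‖z‖ * ⟪u.2, v.2⟫ +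
        (deriv (deriv ψ) ‖z‖ / ‖z‖ ^ 2 - deriv ψ ‖z‖ / ‖z‖ ^ 3) * (⟪z, u.2⟫ * ⟪z, v.2⟫) := by
  set h := fun y : EuclideanSpace ℝ (Fin J) => √(1 - ‖y‖ ^ 2)
  have hh : ContDiffAt ℝ 2 h 0 :=
    (Real.contDiffAt_sqrt (by simp)).comp _ (contDiffAt_const.sub (contDiffAt_id.norm_sq ℝ))
  have hh₀ : h 0 = 1 := by simp [h]
  have hh₁ : fderiv ℝ h 0 = 0 := fderiv_sqrt_one_sub_norm_sq_zero
  have hh₂ : ∀ u v, fderiv ℝ (fderiv ℝ h) 0 u v = -⟪u, v⟫ :=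
    fderiv_fderiv_sqrt_one_sub_norm_sq_zero_apply
  set L := (innerSL ℝ (iotaMap (0 : EuclideanSpace ℝ (Fin J)))).comp
    (ContinuousLinearMap.fst ℝ _ (EuclideanSpace ℝ (Fin m)))
  have hL : L ∘ PhiMap ψ = fun p => h p.1 * ψ ‖p.2‖ := by
    funext p
    simp [L, PhiMap, h, inner_iotaMap_zero_left, mul_comm]
  have hΦ : ContDiffAt ℝ 2 (PhiMap ψ) ((0 : EuclideanSpace ℝ (Fin J)), z) :=
    contDiffAt_PhiMap hψ (by simp) hz
  have hb : ContDiffAt ℝ 2 (fun x : EuclideanSpace ℝ (Fin m) => ψ ‖x‖) z :=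
    hψ.comp z (contDiffAt_norm ℝ hz)
  rw [real_inner_comm, show ⟪iotaMap 0, (fderiv ℝ (fderiv ℝ (PhiMap ψ)) (0, z) u v).1⟫ =
      L (fderiv ℝ (fderiv ℝ (PhiMap ψ)) (0, z) u v) from rfl,
    ← L.fderiv_fderiv_comp_left hΦ, hL,
    fderiv_fderiv_mul_fst_snd_apply hh hb, hh₀, hh₁, hh₂,
    fderiv_fderiv_comp_norm_apply hψ hz]
  simp only [zero_apply, zero_mul, add_zero]
  ring

end PhiMap

theorem cappedCylinder_second_derivatives_general {J m : ℕ}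
    (ψ : ℝ → ℝ) (hψ : ContDiff ℝ 2 ψ)
    (z : EuclideanSpace ℝ (Fin m)) (hz : z ≠ 0) :
    let s := ‖z‖
    let ν : EuclideanSpace ℝ (Fin (J + 1)) × EuclideanSpace ℝ (Fin m) :=
      (Real.sqrt (1 + deriv ψ s ^ 2))⁻¹ •
        ((iotaMap (0 : EuclideanSpace ℝ (Fin J)), -(deriv ψ s / s) • z))
    let D2 := fderiv ℝ (fderiv ℝ (PhiMap ψ (J := J) (m := m))) (0, z)
    -- (a)  ⟨∂²Φ/∂ỹⁱ∂ỹʲ, ν⟩ = -ψ(s) δᵢⱼ / √(1 + ψ'(s)²)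
    (∀ i j : Fin J,
      ⟪(D2 (EuclideanSpace.single i 1, 0) (EuclideanSpace.single j 1, 0)).1, ν.1⟫ +
        ⟪(D2 (EuclideanSpace.single i 1, 0) (EuclideanSpace.single j 1, 0)).2, ν.2⟫ =
      -(ψ s) * (if i = j then (1 : ℝ) else 0) / Real.sqrt (1 + deriv ψ s ^ 2)) ∧
    -- (b)  ⟨∂²Φ/∂ỹʲ∂z^q, ν⟩ = 0
    (∀ j : Fin J, ∀ q : Fin m,
      ⟪(D2 (EuclideanSpace.single j 1, 0) (0, EuclideanSpace.single q 1)).1, ν.1⟫ +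
        ⟪(D2 (EuclideanSpace.single j 1, 0) (0, EuclideanSpace.single q 1)).2, ν.2⟫ = 0) ∧
    -- (c)  ⟨∂²Φ/∂z^p∂z^q, ν⟩
    (∀ p q : Fin m,
      ⟪(D2 (0, EuclideanSpace.single p 1) (0, EuclideanSpace.single q 1)).1, ν.1⟫ +
        ⟪(D2 (0, EuclideanSpace.single p 1) (0, EuclideanSpace.single q 1)).2, ν.2⟫ =
      (Real.sqrt (1 + deriv ψ s ^ 2))⁻¹ *
        (deriv (deriv ψ) s * z p * z q / s ^ 2 +
          deriv ψ s * ((if p = q then (1 : ℝ) else 0) * s ^ 2 - z p * z q) / s ^ 3)) := by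
  intro s ν D2
  have hΦ : ContDiffAt ℝ 2 (PhiMap ψ) ((0 : EuclideanSpace ℝ (Fin J)), z) :=
    contDiffAt_PhiMap hψ.contDiffAt (by simp) hz
  have key : ∀ u v, ⟪(D2 u v).1, ν.1⟫ + ⟪(D2 u v).2, ν.2⟫ =
      (√(1 + deriv ψ s ^ 2))⁻¹ * (-ψ s * ⟪u.1, v.1⟫ + deriv ψ s / s * ⟪u.2, v.2⟫ +
        (deriv (deriv ψ) s / s ^ 2 - deriv ψ s / s ^ 3) * (⟪z, u.2⟫ * ⟪z, v.2⟫)) := by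
    intro u v
    simp only [ν, D2, Prod.smul_fst, inner_smul_right, fderiv_fderiv_PhiMap_snd hΦ,
      inner_zero_left, add_zero, inner_fderiv_fderiv_PhiMap_fst_iotaMap_zero hψ.contDiffAt hz]
    rfl
  have hs : s ≠ 0 := norm_ne_zero_iff.mpr hz
  refine ⟨fun i j => ?_, fun j q => ?_, fun p q => ?_⟩ <;>
    simp only [key, EuclideanSpace.inner_single_one_single_one]
  · simp only [inner_zero_right, mul_zero, add_zero]
    ring
  · simp
  · simp only [EuclideanSpace.inner_single_right, inner_zero_left, conj_trivial, one_mul,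
      mul_zero, zero_add]
    field_simp
    ring

/-- Second fundamental form entries of the rotationally symmetric hypersurface at points
with `ỹ = 0`: the inner products of the second partial derivatives of `Φ` with the unit
normal `ν` are given by the block formulas (a), (b), (c). The inner product on the
product space is `⟪u.1, v.1⟫ + ⟪u.2, v.2⟫`. -/
theorem cappedCylinder_second_derivatives {J m : ℕ} (hJ : 1 ≤ J) (hm : 1 ≤ m)
    (ψ : ℝ → ℝ) (hψ : ContDiff ℝ 2 ψ)
    (z : EuclideanSpace ℝ (Fin m)) (hz : z ≠ 0) :
    let s := ‖z‖
    let ν : EuclideanSpace ℝ (Fin (J + 1)) × EuclideanSpace ℝ (Fin m) :=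
      (Real.sqrt (1 + deriv ψ s ^ 2))⁻¹ •
        ((iotaMap (0 : EuclideanSpace ℝ (Fin J)), -(deriv ψ s / s) • z))
    let D2 := fderiv ℝ (fderiv ℝ (PhiMap ψ (J := J) (m := m))) (0, z)
    -- (a)  ⟨∂²Φ/∂ỹⁱ∂ỹʲ, ν⟩ = -ψ(s) δᵢⱼ / √(1 + ψ'(s)²)
    (∀ i j : Fin J,
      ⟪(D2 (EuclideanSpace.single i 1, 0) (EuclideanSpace.single j 1, 0)).1, ν.1⟫ +
        ⟪(D2 (EuclideanSpace.single i 1, 0) (EuclideanSpace.single j 1, 0)).2, ν.2⟫ =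
      -(ψ s) * (if i = j then (1 : ℝ) else 0) / Real.sqrt (1 + deriv ψ s ^ 2)) ∧
    -- (b)  ⟨∂²Φ/∂ỹʲ∂z^q, ν⟩ = 0
    (∀ j : Fin J, ∀ q : Fin m,
      ⟪(D2 (EuclideanSpace.single j 1, 0) (0, EuclideanSpace.single q 1)).1, ν.1⟫ +
        ⟪(D2 (EuclideanSpace.single j 1, 0) (0, EuclideanSpace.single q 1)).2, ν.2⟫ = 0) ∧
    -- (c)  ⟨∂²Φ/∂z^p∂z^q, ν⟩
    (∀ p q : Fin m,
      ⟪(D2 (0, EuclideanSpace.single p 1) (0, EuclideanSpace.single q 1)).1, ν.1⟫ +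
        ⟪(D2 (0, EuclideanSpace.single p 1) (0, EuclideanSpace.single q 1)).2, ν.2⟫ =
      (Real.sqrt (1 + deriv ψ s ^ 2))⁻¹ *
        (deriv (deriv ψ) s * z p * z q / s ^ 2 +
          deriv ψ s * ((if p = q then (1 : ℝ) else 0) * s ^ 2 - z p * z q) / s ^ 3)) :=
  cappedCylinder_second_derivatives_general ψ hψ z hz
end

section
/- Let E and F be real inner product spaces and let K ⊆ E × F be a convex set. Let 0 < B and A ≥ 2B, and suppose that (y, 0) ∈ K for every y ∈ E with ‖y‖ ≤ B, and (0, z) ∈ K for every z ∈ F with ‖z‖ ≤ A. Then for every z₀ ∈ F with ‖z₀‖ = A/2, the closed ball in E × F of radius B/4 centered at (0, z₀) is contained in K. -/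
/-! Write `p = (u, v)` and `t = ‖v‖ / A`. Then `p = (1 - t) • (y, 0) + t • (0, z)` with `‖z‖ ≤ A`
and `‖y‖ ≤ ‖u‖ / (1 - t)`, so `K` contains every `(u, v)` with `‖u‖ / B + ‖v‖ / A ≤ 1`. On the ball,
`‖u‖ ≤ B / 4` and `‖v‖ ≤ A / 2 + B / 4 ≤ 5 A / 8`, which gives `‖u‖ / B + ‖v‖ / A ≤ 7 / 8`. -/

section

variable {E F : Type*} [NormedAddCommGroup E] [NormedSpace ℝ E]
  [NormedAddCommGroup F] [NormedSpace ℝ F]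

theorem exists_norm_le_smul_eq {a ρ : ℝ} (ha : 0 ≤ a) (hρ : 0 ≤ ρ) {u : E}
    (hu : ‖u‖ ≤ a * ρ) : ∃ y : E, ‖y‖ ≤ ρ ∧ a • y = u := by
  rcases ha.eq_or_lt with rfl | ha
  · exact ⟨0, by simpa using hρ, by simpa [eq_comm] using hu⟩
  refine ⟨a⁻¹ • u, ?_, smul_inv_smul₀ ha.ne' u⟩
  rw [norm_smul, Real.norm_of_nonneg (inv_nonneg.2 ha.le), inv_mul_le_iff₀ ha]
  exact hu

theorem Convex.prod_mem_of_norm_div_add_norm_div_le {K : Set (E × F)} (hK : Convex ℝ K)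
    {r R : ℝ} (hr : 0 < r) (hR : 0 < R)
    (hE : ∀ y : E, ‖y‖ ≤ r → ((y, 0) : E × F) ∈ K)
    (hF : ∀ z : F, ‖z‖ ≤ R → ((0, z) : E × F) ∈ K)
    {u : E} {v : F} (huv : ‖u‖ / r + ‖v‖ / R ≤ 1) : (u, v) ∈ K := by
  set t := ‖v‖ / R
  have ht : 0 ≤ t := by positivity
  have hs : 0 ≤ 1 - t := by linarith [div_nonneg (norm_nonneg u) hr.le]
  have hu : ‖u‖ ≤ (1 - t) * r := (div_le_iff₀ hr).1 (by linarith)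
  have hv : ‖v‖ ≤ t * R := (div_mul_cancel₀ _ hR.ne').ge
  obtain ⟨y, hy, hyu⟩ := exists_norm_le_smul_eq hs hr.le hu
  obtain ⟨z, hz, hzv⟩ := exists_norm_le_smul_eq ht hR.le hv
  have hmem := hK (hE y hy) (hF z hz) hs ht (sub_add_cancel 1 t)
  simpa [hyu, hzv] using hmem

end

/-- Interior-ball construction on the axis: if a convex set `K ⊆ E × F` contains
`(y, 0)` for all `‖y‖ ≤ B` and `(0, z)` for all `‖z‖ ≤ A`, with `0 < B` and `A ≥ 2B`,
then for every `z₀` with `‖z₀‖ = A/2` the closed ball of radius `B/4` centered at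
`(0, z₀)` (for the product inner-product norm, `‖(u,v)‖² = ‖u‖² + ‖v‖²`) is contained
in `K`. -/
theorem interior_ball_on_axis {E F : Type*}
    [NormedAddCommGroup E] [InnerProductSpace ℝ E]
    [NormedAddCommGroup F] [InnerProductSpace ℝ F]
    (K : Set (E × F)) (hK : Convex ℝ K)
    (A B : ℝ) (hB : 0 < B) (hA : 2 * B ≤ A)
    (hEin : ∀ y : E, ‖y‖ ≤ B → ((y, 0) : E × F) ∈ K)
    (hFin : ∀ z : F, ‖z‖ ≤ A → ((0, z) : E × F) ∈ K)
    (z₀ : F) (hz₀ : ‖z₀‖ = A / 2) :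
    ∀ p : E × F, ‖p.1‖ ^ 2 + ‖p.2 - z₀‖ ^ 2 ≤ (B / 4) ^ 2 → p ∈ K := by
  rintro ⟨u, v⟩ hp
  have hu : ‖u‖ ≤ B / 4 :=
    le_of_sq_le_sq (le_of_add_le_of_nonneg_left hp (sq_nonneg _)) (by positivity)
  have hvz : ‖v - z₀‖ ≤ B / 4 :=
    le_of_sq_le_sq (le_of_add_le_of_nonneg_right hp (sq_nonneg _)) (by positivity)
  have hv : ‖v‖ ≤ A / 2 + B / 4 := by linarith [norm_le_norm_sub_add v z₀]
  have hA0 : 0 < A := by linarith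
  refine hK.prod_mem_of_norm_div_add_norm_div_le hB hA0 hEin hFin ?_
  rw [div_add_div _ _ hB.ne' hA0.ne', div_le_one (by positivity)]
  nlinarith
end
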